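/- For every finite connected simple graph G and every t ≥ 2, the cooling number satisfies CL(ILT_2(G)) ≤ CL(ILT_t(G)) ≤ CL(ILT_2(G)) + 1. -/

import Mathlib

/-- A cooling sequence for `G`: a sequence `v : Fin k → V` of sources (the `i`-th source,
0-based, is chosen in round `i + 1`) such that each source is uncooled when chosen
(`dist (v i) (v j) > j - i` for `i < j` in 1-based indexing), and the sequence cannot be
extended: every vertex is cooled by the end of round `k + 1`. -/
def IsCoolingSeq {V : Type*} (G : SimpleGraph V) {k : ℕ} (v : Fin k → V) : Prop :=
  (∀ i j : Fin k, i < j → (j : ℕ) - (i : ℕ) < G.dist (v i) (v j)) ∧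
  (∀ u : V, ∃ i : Fin k, (i : ℕ) + 1 + G.dist (v i) u ≤ k + 1)

/-- The round in which the cooling process with sources `v` ends: the maximum over
vertices `u` of the first round in which `u` is cooled, `min_i (i + dist (v i) u)`
(1-based `i`). -/
noncomputable def coolTime {V : Type*} [Fintype V] (G : SimpleGraph V) {k : ℕ}
    (v : Fin k → V) : ℕ :=
  Finset.univ.sup fun u : V => sInf {m : ℕ | ∃ i : Fin k, m = (i : ℕ) + 1 + G.dist (v i) u}

/-- The cooling number of `G`: the maximum, over all cooling sequences of `G`, of the
round in which the cooling process ends. -/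
noncomputable def coolingNumber {V : Type*} [Fintype V] (G : SimpleGraph V) : ℕ :=
  sSup {T : ℕ | ∃ (k : ℕ) (v : Fin k → V), IsCoolingSeq G v ∧ T = coolTime G v}

/-- The Iterated Local Transitivity graph of `G`, on vertex set `V ⊕ V`, where `Sum.inr x`
is the clone of the original vertex `Sum.inl x`: clones are adjacent to their original
vertex and to its neighbors, and clones are pairwise non-adjacent. -/
def ILT {V : Type*} (G : SimpleGraph V) : SimpleGraph (V ⊕ V) :=
  SimpleGraph.fromRel fun a b =>
    match a, b with
    | Sum.inl x, Sum.inl y => G.Adj x y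
    | Sum.inl x, Sum.inr y => x = y ∨ G.Adj x y
    | Sum.inr x, Sum.inl y => x = y ∨ G.Adj x y
    | Sum.inr _, Sum.inr _ => False

/-- The vertex type of `ILT_t(G)`. -/
def ILTVert (V : Type*) : ℕ → Type _
  | 0 => V
  | t + 1 => ILTVert V t ⊕ ILTVert V t

instance ILTVert.fintype (V : Type*) [Fintype V] : ∀ t, Fintype (ILTVert V t)
  | 0 => inferInstanceAs (Fintype V)
  | t + 1 =>
    letI := ILTVert.fintype V t
    inferInstanceAs (Fintype (ILTVert V t ⊕ ILTVert V t))

/-- `ILTiter G t` is the result of `t` iterated applications of the ILT construction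
to `G`. -/
def ILTiter {V : Type*} (G : SimpleGraph V) : (t : ℕ) → SimpleGraph (ILTVert V t)
  | 0 => G
  | t + 1 => ILT (ILTiter G t)


/-!
Call a sequence *spread* if it satisfies the first condition of a cooling sequence, and let
`L(H)` be the maximal length of a spread sequence. A spread sequence of maximal length cannot
be extended, so it is a cooling sequence, and a cooling process of length `k` ends in round `k`
or `k + 1`; hence `L(H) ≤ CL(H) ≤ L(H) + 1`.

Keeping an optimal cooling sequence of `H` on the original vertices of `ILT H` shows that `CL` is
monotone along the ILT iteration. For the upper bound it suffices that `L(ILT_3) ≤ L(ILT_2)`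
(applied to `ILT_{t-2}(G)` in place of `G`). Map `ILT_3` to `ILT_2` by fixing originals and
sending the clone of `α` to the clone of the `ILT_1`-vertex underlying `α`. This does not shrink
distances `≥ 2`, except on the pairs of clones of `x` and of `x'`, which lie at distance `2` and
hence are consecutive in a spread sequence. Moving one vertex of each such pair to the clone of
the twin of `x` repairs the pair and changes no distance `≥ 3`.
-/

lemma SimpleGraph.Reachable.dist_map_le {V W : Type*} {G : SimpleGraph V} {G' : SimpleGraph W}
    (f : G →g G') {u v : V} (h : G.Reachable u v) : G'.dist (f u) (f v) ≤ G.dist u v := by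
  obtain ⟨p, hp⟩ := h.exists_walk_length_eq_dist
  rw [← hp, ← p.length_map f]
  exact SimpleGraph.dist_le _

section Spread

open SimpleGraph

variable {W : Type*} {H : SimpleGraph W} {k : ℕ} {v : Fin k → W}

def IsSpreadSeq (H : SimpleGraph W) {k : ℕ} (v : Fin k → W) : Prop :=
  ∀ i j : Fin k, i < j → (j : ℕ) - (i : ℕ) < H.dist (v i) (v j)

noncomputable def maxSpreadLength (H : SimpleGraph W) : ℕ :=
  sSup {k | ∃ v : Fin k → W, IsSpreadSeq H v}

lemma isSpreadSeq_iff_natDist_lt :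
    IsSpreadSeq H v ↔ ∀ i j : Fin k, i ≠ j → Nat.dist i j < H.dist (v i) (v j) := by
  refine ⟨fun hv i j hij => ?_, fun hv i j hij => ?_⟩
  · rcases lt_or_gt_of_ne hij with h | h
    · rw [Nat.dist_eq_sub_of_le (Fin.le_iff_val_le_val.1 h.le)]
      exact hv i j h
    · rw [Nat.dist_eq_sub_of_le_right (Fin.le_iff_val_le_val.1 h.le), dist_comm]
      exact hv j i h
  · have := hv i j hij.ne
    rwa [Nat.dist_eq_sub_of_le (Fin.le_iff_val_le_val.1 hij.le)] at this

lemma IsSpreadSeq.injective (hv : IsSpreadSeq H v) : Function.Injective v := by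
  intro i j hij
  by_contra hne
  have := isSpreadSeq_iff_natDist_lt.1 hv i j hne
  simp [hij] at this

lemma IsSpreadSeq.snoc (hv : IsSpreadSeq H v) {u : W}
    (hu : ∀ i : Fin k, k + 1 < (i : ℕ) + 1 + H.dist (v i) u) :
    IsSpreadSeq H (Fin.snoc v u : Fin (k + 1) → W) := by
  intro i j hij
  induction j using Fin.lastCases with
  | last =>
    induction i using Fin.lastCases with
    | last => exact absurd hij (lt_irrefl _)
    | cast i =>
      have := hu i
      simp only [Fin.snoc_castSucc, Fin.snoc_last, Fin.val_last, Fin.val_castSucc]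
      omega
  | cast j =>
    induction i using Fin.lastCases with
    | last => exact absurd hij (not_lt.2 (Fin.le_last _))
    | cast i => simpa using hv _ _ (Fin.castSucc_lt_castSucc_iff.1 hij)

lemma isSpreadSeq_empty : IsSpreadSeq H (Fin.elim0 : Fin 0 → W) :=
  fun i => i.elim0

variable [Fintype W]

lemma IsSpreadSeq.length_le_card (hv : IsSpreadSeq H v) : k ≤ Fintype.card W := by
  simpa using Fintype.card_le_of_injective v hv.injective

lemma bddAbove_spreadLengths : BddAbove {k | ∃ v : Fin k → W, IsSpreadSeq H v} :=
  ⟨Fintype.card W, fun _ ⟨_, hv⟩ => hv.length_le_card⟩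

lemma IsSpreadSeq.length_le_maxSpreadLength (hv : IsSpreadSeq H v) : k ≤ maxSpreadLength H :=
  le_csSup bddAbove_spreadLengths ⟨v, hv⟩

lemma exists_isSpreadSeq_maxSpreadLength (H : SimpleGraph W) :
    ∃ v : Fin (maxSpreadLength H) → W, IsSpreadSeq H v :=
  Nat.sSup_mem (s := {k | ∃ v : Fin k → W, IsSpreadSeq H v}) ⟨0, Fin.elim0, isSpreadSeq_empty⟩
    bddAbove_spreadLengths

lemma IsSpreadSeq.isCoolingSeq_of_length_eq (hv : IsSpreadSeq H v) (hk : k = maxSpreadLength H) :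
    IsCoolingSeq H v := by
  refine ⟨hv, fun u => ?_⟩
  by_contra! hu
  have := (hv.snoc hu).length_le_maxSpreadLength
  omega

lemma one_le_maxSpreadLength [Nonempty W] : 1 ≤ maxSpreadLength H :=
  IsSpreadSeq.length_le_maxSpreadLength (v := fun _ : Fin 1 => Classical.arbitrary W)
    fun i j hij => absurd hij (Subsingleton.elim i j).not_lt

end Spread

section CoolTime

open SimpleGraph

variable {W : Type*} {H : SimpleGraph W} {k : ℕ} {v : Fin k → W}

noncomputable def coolRound (H : SimpleGraph W) (v : Fin k → W) (u : W) : ℕ :=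
  sInf {m : ℕ | ∃ i : Fin k, m = (i : ℕ) + 1 + H.dist (v i) u}

lemma coolRound_le (i : Fin k) (u : W) : coolRound H v u ≤ i + 1 + H.dist (v i) u :=
  Nat.sInf_le ⟨i, rfl⟩

lemma le_coolRound {m : ℕ} {u : W} (i₀ : Fin k) (h : ∀ i : Fin k, m ≤ i + 1 + H.dist (v i) u) :
    m ≤ coolRound H v u :=
  le_csInf ⟨_, i₀, rfl⟩ fun _ ⟨i, hi⟩ => hi ▸ h i

variable [Fintype W]

lemma coolTime_eq_sup_coolRound : coolTime H v = Finset.univ.sup (coolRound H v) := rfl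

lemma IsCoolingSeq.coolTime_le (hv : IsCoolingSeq H v) : coolTime H v ≤ k + 1 := by
  rw [coolTime_eq_sup_coolRound]
  refine Finset.sup_le fun u _ => ?_
  obtain ⟨i, hi⟩ := hv.2 u
  exact (coolRound_le i u).trans hi

/-- The last source of a spread sequence is first cooled in round `k`. -/
lemma IsSpreadSeq.le_coolTime (hv : IsSpreadSeq H v) (hk : 0 < k) : k ≤ coolTime H v := by
  let last : Fin k := ⟨k - 1, by omega⟩
  have hlast : (last : ℕ) = k - 1 := rfl
  rw [coolTime_eq_sup_coolRound]
  refine (le_coolRound last fun i => ?_).trans (Finset.le_sup (Finset.mem_univ (v last)))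
  rcases (Fin.le_iff_val_le_val.2 (show (i : ℕ) ≤ last by omega)).eq_or_lt with rfl | hlt
  · simp only [dist_self]
    omega
  · have := hv i last hlt
    omega

lemma bddAbove_coolTimes :
    BddAbove {T | ∃ (k : ℕ) (v : Fin k → W), IsCoolingSeq H v ∧ T = coolTime H v} := by
  refine ⟨Fintype.card W + 1, ?_⟩
  rintro _ ⟨k, v, hv, rfl⟩
  have := IsSpreadSeq.length_le_card hv.1
  have := hv.coolTime_le
  omega

lemma IsCoolingSeq.coolTime_le_coolingNumber (hv : IsCoolingSeq H v) :
    coolTime H v ≤ coolingNumber H :=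
  le_csSup bddAbove_coolTimes ⟨k, v, hv, rfl⟩

lemma exists_isCoolingSeq_coolTime_eq_coolingNumber (H : SimpleGraph W) :
    ∃ (k : ℕ) (v : Fin k → W), IsCoolingSeq H v ∧ coolingNumber H = coolTime H v := by
  obtain ⟨v, hv⟩ := exists_isSpreadSeq_maxSpreadLength H
  have hne : {T | ∃ (k : ℕ) (v : Fin k → W), IsCoolingSeq H v ∧ T = coolTime H v}.Nonempty :=
    ⟨_, _, v, hv.isCoolingSeq_of_length_eq rfl, rfl⟩
  exact Nat.sSup_mem hne bddAbove_coolTimes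

lemma coolingNumber_le_maxSpreadLength_add_one : coolingNumber H ≤ maxSpreadLength H + 1 := by
  obtain ⟨k, v, hv, hT⟩ := exists_isCoolingSeq_coolTime_eq_coolingNumber H
  have := IsSpreadSeq.length_le_maxSpreadLength hv.1
  have := hv.coolTime_le
  omega

lemma maxSpreadLength_le_coolingNumber [Nonempty W] : maxSpreadLength H ≤ coolingNumber H := by
  obtain ⟨v, hv⟩ := exists_isSpreadSeq_maxSpreadLength H
  exact (hv.le_coolTime one_le_maxSpreadLength).trans
    (hv.isCoolingSeq_of_length_eq rfl).coolTime_le_coolingNumber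

lemma coolTime_le_coolTime_comp {W' : Type*} [Fintype W'] {H' : SimpleGraph W'} (f : W → W')
    (hf : ∀ a b, H'.dist (f a) (f b) = H.dist a b) : coolTime H v ≤ coolTime H' (f ∘ v) := by
  rw [coolTime_eq_sup_coolRound, coolTime_eq_sup_coolRound]
  refine Finset.sup_le fun u _ => le_of_eq_of_le ?_ (Finset.le_sup (Finset.mem_univ (f u)))
  simp only [coolRound, Function.comp_apply, hf]

end CoolTime

namespace ILT

open SimpleGraph Sum

variable {V : Type*} {G : SimpleGraph V} {x y : V}

@[simp] lemma adj_inl_inl : (ILT G).Adj (inl x) (inl y) ↔ G.Adj x y := by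
  simp only [ILT, fromRel_adj, ne_eq, inl.injEq, adj_comm, or_self, and_iff_right_iff_imp]
  exact Adj.ne

@[simp] lemma adj_inl_inr : (ILT G).Adj (inl x) (inr y) ↔ x = y ∨ G.Adj x y := by
  simp [ILT, eq_comm, adj_comm]

@[simp] lemma adj_inr_inl : (ILT G).Adj (inr x) (inl y) ↔ x = y ∨ G.Adj x y := by
  simp [ILT, eq_comm, adj_comm]

@[simp] lemma not_adj_inr_inr : ¬ (ILT G).Adj (inr x) (inr y) := by
  simp [ILT]

def base : V ⊕ V → V := Sum.elim id id

@[simp] lemma base_inl : base (inl x : V ⊕ V) = x := rfl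

@[simp] lemma base_inr : base (inr x : V ⊕ V) = x := rfl

@[simp] lemma base_swap (w : V ⊕ V) : base w.swap = base w := by
  cases w <;> rfl

lemma dist_inl_inr_self : (ILT G).dist (inl x) (inr x) = 1 := by
  simp

lemma adj_base {w z : V ⊕ V} (h : (ILT G).Adj w z) :
    base w = base z ∨ G.Adj (base w) (base z) := by
  cases w <;> cases z <;> simp_all

lemma adj_of_base_eq {w z : V ⊕ V} (hne : w ≠ z) (h : base w = base z) : (ILT G).Adj w z := by
  cases w <;> cases z <;> simp_all

open Classical in
noncomputable def cloneHom (S : Set V) (hS : G.IsIndepSet S) : G →g ILT G where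
  toFun x := if x ∈ S then inr x else inl x
  map_rel' {x y} h := by
    by_cases hx : x ∈ S <;> by_cases hy : y ∈ S <;> simp [hx, hy, h]
    exact hS hx hy h.ne h

lemma connected (hG : G.Connected) : (ILT G).Connected := by
  have toInl (w : V ⊕ V) : (ILT G).Reachable w (inl (base w)) := by
    cases w with
    | inl _ => rfl
    | inr x => exact Adj.reachable (by simp)
  have inl_reach (x y : V) : (ILT G).Reachable (inl x) (inl y) := by
    simpa [cloneHom] using (hG x y).map (cloneHom ∅ (by simp))
  have := hG.nonempty
  exact (connected_iff _).2 ⟨fun w z =>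
    ((toInl w).trans (inl_reach _ _)).trans (toInl z).symm, inferInstance⟩

lemma dist_base_le_length {w z : V ⊕ V} (p : (ILT G).Walk w z) :
    G.dist (base w) (base z) ≤ p.length := by
  induction p with
  | nil => simp
  | @cons _ c e h p ih =>
    rw [Walk.length_cons]
    rcases adj_base h with he | ha
    · rw [he]; omega
    · have := ha.reachable.dist_triangle_left (base e)
      rw [dist_eq_one_iff_adj.2 ha] at this
      omega

section Distance

variable (hG : G.Connected)
include hG

lemma dist_base_le (w z : V ⊕ V) : G.dist (base w) (base z) ≤ (ILT G).dist w z := by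
  obtain ⟨p, hp⟩ := (connected hG).exists_walk_length_eq_dist w z
  exact hp ▸ dist_base_le_length p

lemma dist_cloneHom_le {S : Set V} (hS : G.IsIndepSet S) (x y : V) :
    (ILT G).dist (cloneHom S hS x) (cloneHom S hS y) ≤ G.dist x y :=
  (hG x y).dist_map_le _

lemma dist_inl_inl (x y : V) : (ILT G).dist (inl x) (inl y) = G.dist x y :=
  le_antisymm (by simpa [cloneHom] using dist_cloneHom_le hG (S := ∅) (by simp) x y)
    (dist_base_le hG (inl x) (inl y))

lemma dist_inl_inr (hxy : x ≠ y) : (ILT G).dist (inl x) (inr y) = G.dist x y :=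
  le_antisymm (by simpa [cloneHom, hxy] using dist_cloneHom_le hG (S := {y}) (by simp) x y)
    (dist_base_le hG (inl x) (inr y))

lemma dist_inr_inl (hxy : x ≠ y) : (ILT G).dist (inr x) (inl y) = G.dist x y := by
  rw [dist_comm, dist_inl_inr hG hxy.symm, dist_comm]

lemma dist_inr_inr (h : ¬ G.Adj x y) : (ILT G).dist (inr x) (inr y) = G.dist x y := by
  have hS : G.IsIndepSet {x, y} := by
    simp [Set.pairwise_insert, adj_comm, h]
  exact le_antisymm (by simpa [cloneHom] using dist_cloneHom_le hG hS x y)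
    (dist_base_le hG (inr x) (inr y))

omit hG in
lemma dist_inr_inr_of_adj (h : G.Adj x y) : (ILT G).dist (inr x) (inr y) = 2 := by
  let hwalk : (ILT G).Walk (inr x) (inr y) :=
    .cons (adj_inr_inl.2 (Or.inl rfl)) (.cons (adj_inl_inr.2 (Or.inr h)) .nil)
  have hle : (ILT G).dist (inr x) (inr y) ≤ 2 := dist_le hwalk
  have hlt := hwalk.reachable.one_lt_dist_of_ne_of_not_adj (by simp [h.ne]) not_adj_inr_inr
  omega

lemma dist_eq_dist_base {w z : V ⊕ V} (h : 2 ≤ G.dist (base w) (base z)) :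
    (ILT G).dist w z = G.dist (base w) (base z) := by
  have hne : base w ≠ base z := by rintro he; simp [he] at h
  have hnadj : ¬ G.Adj (base w) (base z) := fun ha => by simp [dist_eq_one_iff_adj.2 ha] at h
  cases w <;> cases z <;> simp_all [dist_inl_inl, dist_inl_inr, dist_inr_inl, dist_inr_inr]

lemma dist_le_dist_base_add_one (w z : V ⊕ V) :
    (ILT G).dist w z ≤ G.dist (base w) (base z) + 1 := by
  rcases le_or_gt 2 (G.dist (base w) (base z)) with h | h
  · rw [dist_eq_dist_base hG h]; omega
  · rcases eq_or_ne w z with rfl | hne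
    · simp
    by_cases hb : base w = base z
    · rw [dist_eq_one_iff_adj.2 (adj_of_base_eq hne hb)]
      omega
    have hpos : 0 < G.dist (base w) (base z) := hG.pos_dist_of_ne hb
    have ha : G.Adj (base w) (base z) := dist_eq_one_iff_adj.1 (by omega)
    cases w <;> cases z <;> simp_all [dist_inl_inl, dist_inl_inr, dist_inr_inl, dist_inr_inr_of_adj]
    omega

lemma dist_inl_le_dist_inr {z : V ⊕ V} (hz : z ≠ inr x) :
    (ILT G).dist (inl x) z ≤ (ILT G).dist (inr x) z := by
  have hinl : (ILT G).dist (inl x) z = G.dist x (base z) := by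
    cases z with
    | inl y => exact dist_inl_inl hG x y
    | inr y => exact dist_inl_inr hG (by rintro rfl; exact hz rfl)
  simpa [hinl] using dist_base_le hG (inr x) z

lemma dist_swap_eq {w z : V ⊕ V} (h : 3 ≤ (ILT G).dist w z) :
    (ILT G).dist w.swap z = (ILT G).dist w z := by
  have h2 : 2 ≤ G.dist (base w) (base z) := by
    have := dist_le_dist_base_add_one hG w z
    omega
  rw [dist_eq_dist_base hG h2, dist_eq_dist_base hG (by simpa using h2), base_swap]

end Distance

def collapse : (V ⊕ V) ⊕ (V ⊕ V) → V ⊕ V := Sum.elim id (inr ∘ base)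

@[simp] lemma collapse_inl (w : V ⊕ V) : collapse (inl w) = w := rfl

@[simp] lemma collapse_inr (w : V ⊕ V) : collapse (inr w) = inr (base w) := rfl

def IsTwinClonePair (θ φ : (V ⊕ V) ⊕ (V ⊕ V)) : Prop :=
  ∃ x, θ = inr (inl x) ∧ φ = inr (inr x)

lemma IsTwinClonePair.dist_eq_two {θ φ : (V ⊕ V) ⊕ (V ⊕ V)} (h : IsTwinClonePair θ φ) :
    (ILT (ILT G)).dist θ φ = 2 := by
  obtain ⟨x, rfl, rfl⟩ := h
  exact dist_inr_inr_of_adj (by simp)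

section Collapse

variable (hG : G.Connected)
include hG

lemma dist_le_dist_inr_base {w z : V ⊕ V} (hz : z ≠ inr (base w)) :
    (ILT G).dist w z ≤ (ILT G).dist (inr (base w)) z := by
  cases w with
  | inl x => exact dist_inl_le_dist_inr hG hz
  | inr x => rfl

lemma dist_le_dist_collapse_inl_inr {α β : V ⊕ V} (h2 : 2 ≤ (ILT (ILT G)).dist (inl α) (inr β)) :
    (ILT (ILT G)).dist (inl α) (inr β) ≤ (ILT G).dist (collapse (inl α)) (collapse (inr β)) := by
  have hne : α ≠ β := by rintro rfl; simp [dist_inl_inr_self] at h2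
  rw [dist_inl_inr (connected hG) hne] at h2 ⊢
  have hα : α ≠ inr (base β) := by
    rintro rfl
    simp [dist_eq_one_iff_adj.2 (adj_of_base_eq hne base_inr)] at h2
  simpa only [collapse_inl, collapse_inr, dist_comm (v := α)] using
    dist_le_dist_inr_base hG hα

lemma dist_le_dist_collapse {θ φ : (V ⊕ V) ⊕ (V ⊕ V)} (h2 : 2 ≤ (ILT (ILT G)).dist θ φ)
    (hθφ : ¬ IsTwinClonePair θ φ) (hφθ : ¬ IsTwinClonePair φ θ) :
    (ILT (ILT G)).dist θ φ ≤ (ILT G).dist (collapse θ) (collapse φ) := by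
  have hK := connected hG
  rcases θ with α | α <;> rcases φ with β | β
  · rw [dist_inl_inl hK]; rfl
  · exact dist_le_dist_collapse_inl_inr hG h2
  · rw [dist_comm] at h2 ⊢
    rw [dist_comm (u := collapse (inr α))]
    exact dist_le_dist_collapse_inl_inr hG h2
  · have hne : α ≠ β := by rintro rfl; simp at h2
    by_cases hadj : (ILT G).Adj α β
    · rw [dist_inr_inr_of_adj hadj]
      rcases adj_base hadj with hb | hb
      · exfalso
        rcases α with a | a <;> rcases β with b | b <;> simp_all [IsTwinClonePair]
      · simp [dist_inr_inr_of_adj hb]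
    · have hb : base α ≠ base β := fun hb => hadj (adj_of_base_eq hne hb)
      rw [dist_inr_inr hK hadj]
      calc (ILT G).dist α β ≤ (ILT G).dist (inr (base α)) β :=
            dist_le_dist_inr_base hG (by rintro rfl; simp at hb)
        _ = (ILT G).dist β (inr (base α)) := dist_comm
        _ ≤ (ILT G).dist (inr (base β)) (inr (base α)) :=
            dist_le_dist_inr_base hG (by simpa using hb)
        _ = (ILT G).dist (collapse (inr α)) (collapse (inr β)) := dist_comm

lemma dist_map_swap_eq {w z : (V ⊕ V) ⊕ (V ⊕ V)} (h : 3 ≤ (ILT (ILT G)).dist w z) :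
    (ILT (ILT G)).dist (w.map id Sum.swap) z = (ILT (ILT G)).dist w z := by
  have hK := connected hG
  rcases w with α | x
  · rfl
  have h2 : 2 ≤ (ILT G).dist x (base z) := by
    have := dist_le_dist_base_add_one hK (inr x) z
    simp only [base_inr] at this
    omega
  have hx : (ILT (ILT G)).dist (inr x) z = (ILT G).dist x (base z) := dist_eq_dist_base hK h2
  have hswap : (ILT G).dist x.swap (base z) = (ILT G).dist x (base z) :=
    dist_swap_eq hG (by omega)
  rw [Sum.map_inr, hx, dist_eq_dist_base hK (by simpa [hswap] using h2), base_inr, hswap]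

lemma dist_ite_map_swap_eq {w z : (V ⊕ V) ⊕ (V ⊕ V)} (h : 3 ≤ (ILT (ILT G)).dist w z)
    (p q : Prop) [Decidable p] [Decidable q] :
    (ILT (ILT G)).dist (if p then w.map id Sum.swap else w) (if q then z.map id Sum.swap else z)
      = (ILT (ILT G)).dist w z := by
  have hleft {w' : (V ⊕ V) ⊕ (V ⊕ V)} (h' : 3 ≤ (ILT (ILT G)).dist w' z) :
      (ILT (ILT G)).dist w' (if q then z.map id Sum.swap else z) = (ILT (ILT G)).dist w' z := by
    by_cases hq : q
    · rw [if_pos hq, dist_comm, dist_map_swap_eq hG (by rwa [dist_comm]), dist_comm]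
    · rw [if_neg hq]
  by_cases hp : p
  · rw [if_pos hp, hleft (by rwa [dist_map_swap_eq hG h]), dist_map_swap_eq hG h]
  · rw [if_neg hp, hleft h]

end Collapse

open Classical in
/-- Both vertices of a twin clone pair collapse to `inr x`; the first one is sent to the clone
of the twin `x.swap` of `x` instead. -/
noncomputable def repair {k : ℕ} (a : Fin k → ((V ⊕ V) ⊕ (V ⊕ V)) ⊕ ((V ⊕ V) ⊕ (V ⊕ V))) (i : Fin k) :
    (V ⊕ V) ⊕ (V ⊕ V) :=
  if ∃ j, IsTwinClonePair (a i) (a j) then (collapse (a i)).map id Sum.swap else collapse (a i)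

end ILT

open SimpleGraph Sum ILT

lemma coolingNumber_le_coolingNumber_ILT {W : Type*} [Fintype W] {H : SimpleGraph W}
    (hH : H.Connected) : coolingNumber H ≤ coolingNumber (ILT H) := by
  obtain ⟨k, v, hv, hT⟩ := exists_isCoolingSeq_coolTime_eq_coolingNumber H
  have hcool : IsCoolingSeq (ILT H) (inl ∘ v) := by
    refine ⟨fun i j hij => by simpa [dist_inl_inl hH] using hv.1 i j hij, fun u => ?_⟩
    rcases u with y | y
    · simpa [dist_inl_inl hH] using hv.2 y
    · obtain ⟨i, hi⟩ := hv.2 y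
      refine ⟨i, ?_⟩
      rcases eq_or_ne (v i) y with hy | hy
      · simp only [Function.comp_apply, hy, dist_inl_inr_self]
        omega
      · simpa [dist_inl_inr hH hy] using hi
  calc coolingNumber H = coolTime H v := hT
    _ ≤ coolTime (ILT H) (inl ∘ v) := coolTime_le_coolTime_comp inl (dist_inl_inl hH)
    _ ≤ coolingNumber (ILT H) := hcool.coolTime_le_coolingNumber

section Repair

variable {V : Type*} {G : SimpleGraph V} {k : ℕ} (hG : G.Connected)
include hG

lemma IsSpreadSeq.natDist_lt_dist_collapse {a : Fin k → (V ⊕ V) ⊕ (V ⊕ V)}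
    (ha : IsSpreadSeq (ILT (ILT G)) a) {i j : Fin k} (hij : i ≠ j)
    (h₁ : ¬ IsTwinClonePair (a i) (a j)) (h₂ : ¬ IsTwinClonePair (a j) (a i)) :
    Nat.dist i j < (ILT G).dist (collapse (a i)) (collapse (a j)) := by
  have hlt := isSpreadSeq_iff_natDist_lt.1 ha i j hij
  have hpos := Nat.dist_pos_of_ne (Fin.val_ne_of_ne hij)
  exact hlt.trans_le (dist_le_dist_collapse hG (by omega) h₁ h₂)

omit hG in
lemma IsSpreadSeq.natDist_eq_one_of_isTwinClonePair {a : Fin k → (V ⊕ V) ⊕ (V ⊕ V)}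
    (ha : IsSpreadSeq (ILT (ILT G)) a) {i j : Fin k} (h : IsTwinClonePair (a i) (a j)) :
    Nat.dist i j = 1 := by
  have hij : i ≠ j := by
    rintro rfl
    obtain ⟨x, h₁, h₂⟩ := h
    simp [h₁] at h₂
  have hlt := isSpreadSeq_iff_natDist_lt.1 ha i j hij
  have hpos := Nat.dist_pos_of_ne (Fin.val_ne_of_ne hij)
  rw [h.dist_eq_two] at hlt
  omega

/-- Since the pair collapses to a single vertex, the spread condition for both of its members
gives distance at least `3` to any other collapsed vertex, where swapping is harmless. -/
lemma IsSpreadSeq.natDist_lt_dist_repair_of_isTwinClonePair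
    {a : Fin k → ((V ⊕ V) ⊕ (V ⊕ V)) ⊕ ((V ⊕ V) ⊕ (V ⊕ V))}
    (ha : IsSpreadSeq (ILT (ILT (ILT G))) a) {i j p : Fin k} (hip : IsTwinClonePair (a i) (a p))
    (hij : i ≠ j) :
    Nat.dist i j < (ILT (ILT G)).dist (repair a i) (repair a j) := by
  have hK := connected hG
  have hpi := ha.natDist_eq_one_of_isTwinClonePair hip
  obtain ⟨x, hai, hap⟩ := hip
  have hri : repair a i = inr x.swap := by
    rw [repair, if_pos ⟨p, x, hai, hap⟩, hai]
    cases x <;> rfl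
  by_cases hjp : j = p
  · subst hjp
    have hrj : repair a j = inr x := by simp [repair, hap, IsTwinClonePair]
    rw [hri, hrj, dist_inr_inr_of_adj (by cases x <;> simp)]
    omega
  have h₁ := ha.natDist_lt_dist_collapse hK hij
    (by simpa [IsTwinClonePair, hai, ← hap] using fun h => hjp (ha.injective h))
    (by simp [IsTwinClonePair, hai])
  have h₂ := ha.natDist_lt_dist_collapse hK (Ne.symm hjp)
    (by simp [IsTwinClonePair, hap])
    (by simpa [IsTwinClonePair, hap, ← hai] using fun h => hij (ha.injective h).symm)
  have hval : (i : ℕ) ≠ j ∧ (p : ℕ) ≠ j := ⟨Fin.val_ne_of_ne hij, Fin.val_ne_of_ne (Ne.symm hjp)⟩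
  have hcol : collapse (a p) = collapse (a i) := by simp [hai, hap]
  rw [hcol] at h₂
  have h3 : 3 ≤ (ILT (ILT G)).dist (collapse (a i)) (collapse (a j)) := by
    unfold Nat.dist at *
    omega
  rw [repair, repair, dist_ite_map_swap_eq hG h3]
  exact h₁

lemma IsSpreadSeq.repair {a : Fin k → ((V ⊕ V) ⊕ (V ⊕ V)) ⊕ ((V ⊕ V) ⊕ (V ⊕ V))}
    (ha : IsSpreadSeq (ILT (ILT (ILT G))) a) : IsSpreadSeq (ILT (ILT G)) (repair a) := by
  refine isSpreadSeq_iff_natDist_lt.2 fun i j hij => ?_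
  by_cases hi : ∃ p, IsTwinClonePair (a i) (a p)
  · obtain ⟨p, hp⟩ := hi
    exact ha.natDist_lt_dist_repair_of_isTwinClonePair hG hp hij
  by_cases hj : ∃ p, IsTwinClonePair (a j) (a p)
  · obtain ⟨p, hp⟩ := hj
    rw [Nat.dist_comm, SimpleGraph.dist_comm]
    exact ha.natDist_lt_dist_repair_of_isTwinClonePair hG hp hij.symm
  rw [ILT.repair, ILT.repair, if_neg hi, if_neg hj]
  exact ha.natDist_lt_dist_collapse (connected hG) hij (fun h => hi ⟨j, h⟩) (fun h => hj ⟨i, h⟩)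

lemma maxSpreadLength_ILT_ILT_ILT_le [Fintype V] :
    maxSpreadLength (ILT (ILT (ILT G))) ≤ maxSpreadLength (ILT (ILT G)) := by
  obtain ⟨a, ha⟩ := exists_isSpreadSeq_maxSpreadLength (ILT (ILT (ILT G)))
  exact (ha.repair hG).length_le_maxSpreadLength

end Repair

lemma SimpleGraph.Connected.ILTiter {V : Type*} {G : SimpleGraph V} (hG : G.Connected) :
    ∀ t, (ILTiter G t).Connected
  | 0 => hG
  | t + 1 => ILT.connected (hG.ILTiter t)

/-- For every finite connected simple graph `G` and `t ≥ 2`,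
`CL(ILT_2(G)) ≤ CL(ILT_t(G)) ≤ CL(ILT_2(G)) + 1`. -/
theorem coolingNumber_ILTiter_bounds {V : Type*} [Fintype V] (G : SimpleGraph V)
    (hG : G.Connected) (t : ℕ) (ht : 2 ≤ t) :
    coolingNumber (ILTiter G 2) ≤ coolingNumber (ILTiter G t) ∧
    coolingNumber (ILTiter G t) ≤ coolingNumber (ILTiter G 2) + 1 := by
  obtain ⟨u, rfl⟩ : ∃ u, t = u + 2 := ⟨t - 2, by omega⟩
  have hmono : Monotone fun u => coolingNumber (ILTiter G (u + 2)) :=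
    monotone_nat_of_le_succ fun u => coolingNumber_le_coolingNumber_ILT (hG.ILTiter (u + 2))
  have hanti : Antitone fun u => maxSpreadLength (ILTiter G (u + 2)) :=
    antitone_nat_of_succ_le fun u => maxSpreadLength_ILT_ILT_ILT_le (hG.ILTiter u)
  have : Nonempty (ILTVert V 2) := ⟨inl (inl hG.nonempty.some)⟩
  refine ⟨hmono u.zero_le, ?_⟩
  calc coolingNumber (ILTiter G (u + 2))
      ≤ maxSpreadLength (ILTiter G (u + 2)) + 1 := coolingNumber_le_maxSpreadLength_add_one
    _ ≤ maxSpreadLength (ILTiter G 2) + 1 := by gcongr; exact hanti u.zero_le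
    _ ≤ coolingNumber (ILTiter G 2) + 1 := by gcongr; exact maxSpreadLength_le_coolingNumber
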